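/- arXiv:2201.08417 — 4 statements merged into one kernel-verified Lean document; each statement's English description precedes it below -/
import Mathlib

section
/- For every subset Y ⊆ {1,…,M}, the determinant of the principal submatrix of the nonsymmetric kernel is bounded by that of the symmetric proposal kernel: det(L_Y) ≤ det(L̂_Y). -/
open Matrix

/-- The block-diagonal matrix `X = diag(ρ₁,…,ρ_K, C₁,…,C_{K/2})` with
`C_j = [[0, σ_j],[−σ_j, 0]]`, of size `2K × 2K` (indices `0,…,K-1` carry the `ρ`'s,
the pair `(K+2j, K+2j+1)` carries the block `C_j`, `0`-indexed). -/
noncomputable def Xmat (K : ℕ) (ρ σ : ℕ → ℝ) : Matrix (Fin (2 * K)) (Fin (2 * K)) ℝ :=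
  Matrix.of fun i j =>
    if (i : ℕ) < K then (if (i : ℕ) = (j : ℕ) then ρ i else 0)
    else if (j : ℕ) < K then 0
    else if ((i : ℕ) - K) / 2 = ((j : ℕ) - K) / 2 then
      (if ((i : ℕ) - K) % 2 = 0 ∧ ((j : ℕ) - K) % 2 = 1 then σ (((i : ℕ) - K) / 2)
       else if ((i : ℕ) - K) % 2 = 1 ∧ ((j : ℕ) - K) % 2 = 0 then -σ (((i : ℕ) - K) / 2)
       else 0)
    else 0

/-- The diagonal matrix `X̂ = diag(ρ₁,…,ρ_K, σ₁, σ₁,…,σ_{K/2}, σ_{K/2})`. -/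
noncomputable def Xhat (K : ℕ) (ρ σ : ℕ → ℝ) : Matrix (Fin (2 * K)) (Fin (2 * K)) ℝ :=
  Matrix.diagonal fun i => if (i : ℕ) < K then ρ i else σ (((i : ℕ) - K) / 2)

/-- Determinant of the principal submatrix of `L` indexed by the subset `Y`
(equal to `1` when `Y = ∅`). -/
noncomputable def pdet {n : ℕ} (L : Matrix (Fin n) (Fin n) ℝ) (Y : Finset (Fin n)) : ℝ :=
  (L.submatrix (fun a : {x // x ∈ Y} => a.1) (fun a : {x // x ∈ Y} => a.1)).det

/-!
Put `D = diag (√X̂ᵢᵢ)`. Then `X̂ = D²` and `X = D J D`, where `J = Xmat K 1 1` is a signed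
permutation matrix, hence orthogonal. With `B` the rows of `Z` indexed by `Y` and `A = B D`, the
claim reads `det (A J Aᵀ) ≤ det (A Aᵀ)`. This follows from the Cauchy–Schwarz inequality
`det (A Cᵀ)² ≤ det (A Aᵀ) det (C Cᵀ)` for `C = A Jᵀ`, itself obtained from the Schur complement of
the Gram matrix of the rows of `A` and `C` and the monotonicity of `det` in the Loewner order.
-/

open scoped MatrixOrder

namespace Matrix

section Determinant

variable {m n : Type*} [Fintype m] [DecidableEq m] [Fintype n]

theorem det_le_one_of_nonneg_of_le_one {T : Matrix m m ℝ} (hT : 0 ≤ T) (hT1 : T ≤ 1) :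
    T.det ≤ 1 := by
  have hT' : T.PosSemidef := hT.posSemidef
  have hspec : ∀ x ∈ spectrum ℝ T, x ≤ 1 := (CFC.le_one_iff T).mp hT1
  rw [hT'.isHermitian.det_eq_prod_eigenvalues]
  exact Finset.prod_le_one (fun i _ => by simpa using hT'.eigenvalues_nonneg i)
    fun i _ => by simpa using hspec _ (hT'.isHermitian.eigenvalues_mem_spectrum_real i)

theorem det_eq_zero_of_le_of_det_eq_zero {S G : Matrix m m ℝ} (hS : 0 ≤ S) (hSG : S ≤ G)
    (hG : G.det = 0) : S.det = 0 := by
  obtain ⟨v, hv, hGv⟩ := exists_mulVec_eq_zero_iff.mpr hG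
  refine exists_mulVec_eq_zero_iff.mp ⟨v, hv, (hS.posSemidef.dotProduct_mulVec_zero_iff v).mp ?_⟩
  refine le_antisymm ?_ (hS.posSemidef.dotProduct_mulVec_nonneg v)
  simpa [sub_mulVec, hGv] using hSG.dotProduct_mulVec_nonneg v

theorem det_le_det_of_le {S G : Matrix m m ℝ} (hS : 0 ≤ S) (hSG : S ≤ G) :
    S.det ≤ G.det := by
  by_cases hG : G.det = 0
  · rw [det_eq_zero_of_le_of_det_eq_zero hS hSG hG, hG]
  -- conjugating by `G^(-1/2)` reduces to the case `G = 1`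
  set R := CFC.sqrt G
  have hRR : R * R = G := CFC.sqrt_mul_sqrt_self G (hS.trans hSG)
  have hR : IsUnit R.det :=
    isUnit_iff_ne_zero.mpr fun h => hG (by rw [← hRR, det_mul, h, zero_mul])
  have hR_star : star R⁻¹ = R⁻¹ := by
    rw [star_eq_conjTranspose, conjTranspose_nonsing_inv, ← star_eq_conjTranspose,
      (CFC.sqrt_nonneg G).isSelfAdjoint.star_eq]
  set T := R⁻¹ * S * R⁻¹
  have hT0 : 0 ≤ T := by simpa [hR_star] using star_left_conjugate_le_conjugate hS R⁻¹
  have hT1 : T ≤ 1 := by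
    have hGR : R⁻¹ * G * R⁻¹ = 1 := by
      rw [← hRR, ← mul_assoc, nonsing_inv_mul _ hR, one_mul, mul_nonsing_inv _ hR]
    simpa [hR_star, hGR] using star_left_conjugate_le_conjugate hSG R⁻¹
  have hST : S = R * T * R := by
    simp only [T, ← mul_assoc, mul_nonsing_inv _ hR, one_mul]
    rw [mul_assoc, nonsing_inv_mul _ hR, mul_one]
  calc S.det = G.det * T.det := by rw [hST, ← hRR]; simp only [det_mul]; ring
    _ ≤ G.det * 1 := mul_le_mul_of_nonneg_left (det_le_one_of_nonneg_of_le_one hT0 hT1)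
          (hS.trans hSG).posSemidef.det_nonneg
    _ = G.det := mul_one _

/-- Cauchy–Schwarz inequality for determinants. -/
theorem det_mul_transpose_sq_le (A B : Matrix m n ℝ) :
    (A * Bᵀ).det ^ 2 ≤ (A * Aᵀ).det * (B * Bᵀ).det := by
  have hAA : (A * Aᵀ).PosSemidef := by simpa using posSemidef_self_mul_conjTranspose A
  by_cases hG : (A * Aᵀ).det = 0
  · obtain ⟨v, hv, hGv⟩ := exists_mulVec_eq_zero_iff.mpr hG
    have hAv : Aᵀ *ᵥ v = 0 := by
      simpa using (self_mul_conjTranspose_mulVec_eq_zero A v).mp hGv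
    have hABv : v ᵥ* (A * Bᵀ) = 0 := by
      rw [← vecMul_vecMul, ← mulVec_transpose A, hAv, zero_vecMul]
    rw [exists_vecMul_eq_zero_iff.mp ⟨v, hv, hABv⟩, hG]
    simp
  have hGpos : (A * Aᵀ).PosDef := hAA.posDef_iff_det_ne_zero.mpr hG
  let := invertibleOfIsUnitDet _ (isUnit_iff_ne_zero.mpr hG)
  -- the Gram matrix of the rows of `A` and `B` is positive semidefinite; take its Schur complement
  have hblocks : fromBlocks (A * Aᵀ) (A * Bᵀ) (A * Bᵀ)ᴴ (B * Bᵀ)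
      = fromRows A B * (fromRows A B)ᵀ := by
    simp [transpose_fromRows, transpose_mul]
  have hSchur := (hGpos.fromBlocks₁₁ (A * Bᵀ) (B * Bᵀ)).mp
    (hblocks ▸ by simpa using posSemidef_self_mul_conjTranspose (fromRows A B))
  set S := (A * Bᵀ)ᴴ * (A * Aᵀ)⁻¹ * (A * Bᵀ)
  have hS : 0 ≤ S := (hGpos.posSemidef.inv.conjTranspose_mul_mul_same (A * Bᵀ)).nonneg
  have hdetS : S.det * (A * Aᵀ).det = (A * Bᵀ).det ^ 2 := by
    have := isUnit_iff_ne_zero.mpr hG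
    simp only [S, det_mul, det_conjTranspose, det_nonsing_inv, Ring.inverse_eq_inv']
    field_simp
    simp [sq]
  calc (A * Bᵀ).det ^ 2 = S.det * (A * Aᵀ).det := hdetS.symm
    _ ≤ (B * Bᵀ).det * (A * Aᵀ).det :=
        mul_le_mul_of_nonneg_right (det_le_det_of_le hS (le_iff.mpr hSchur)) hAA.det_nonneg
    _ = _ := mul_comm _ _

theorem det_mul_mul_transpose_le [DecidableEq n] {J : Matrix n n ℝ} (hJ : J * Jᵀ = 1)
    (A : Matrix m n ℝ) : (A * J * Aᵀ).det ≤ (A * Aᵀ).det := by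
  have hAB : A * (A * Jᵀ)ᵀ = A * J * Aᵀ := by
    rw [transpose_mul, transpose_transpose, Matrix.mul_assoc]
  have hBB : A * Jᵀ * (A * Jᵀ)ᵀ = A * Aᵀ := by
    rw [transpose_mul, transpose_transpose, Matrix.mul_assoc, ← Matrix.mul_assoc Jᵀ,
      mul_eq_one_comm.mp hJ, Matrix.one_mul]
  have hsq := det_mul_transpose_sq_le A (A * Jᵀ)
  rw [hAB, hBB, ← sq] at hsq
  have hAA : (A * Aᵀ).PosSemidef := by simpa using posSemidef_self_mul_conjTranspose A
  exact (abs_le_of_sq_le_sq' hsq hAA.det_nonneg).2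

end Determinant

variable {n : Type*} [Fintype n] [DecidableEq n]

theorem diagonal_mul_eq_diagonal_sqrt_mul_mul {d : n → ℝ} (hd : ∀ i, 0 ≤ d i)
    {J : Matrix n n ℝ} (hJ : ∀ i j, J i j ≠ 0 → d i = d j) :
    diagonal d * J = diagonal (fun i => √(d i)) * J * diagonal (fun i => √(d i)) := by
  ext i j
  simp only [diagonal_mul, mul_diagonal]
  by_cases h : J i j = 0
  · simp [h]
  · rw [← hJ i j h, mul_right_comm, Real.mul_self_sqrt (hd i)]

theorem mul_transpose_eq_one_of_signed_perm {J : Matrix n n ℝ} {p : n → n} (hp : p.Injective)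
    {s : n → ℝ} (hs : ∀ i, s i * s i = 1) (hJ : ∀ i j, J i j = if j = p i then s i else 0) :
    J * Jᵀ = 1 := by
  ext i k
  simp only [mul_apply, transpose_apply, hJ, one_apply, ite_mul, zero_mul, mul_ite, mul_zero,
    Finset.sum_ite_eq', Finset.mem_univ, if_true]
  by_cases hik : i = k
  · simp [hik, hs]
  · simp [hik, hp.eq_iff, Ne.symm hik]

end Matrix

/-- For even `K`, the pairs `{K + 2a, K + 2a + 1}` swapped here are the `2 × 2` blocks of `Xmat`. -/
def blockPartner (K : ℕ) (i : Fin (2 * K)) : Fin (2 * K) :=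
  ⟨if (i : ℕ) < K then i else if (i : ℕ) % 2 = 0 then i + 1 else i - 1,
    by have := i.isLt; split_ifs <;> omega⟩

theorem blockPartner_injective {K : ℕ} (hK : Even K) : (blockPartner K).Injective := by
  obtain ⟨t, rfl⟩ := hK
  intro i j h
  simp only [blockPartner, Fin.mk.injEq] at h
  ext
  split_ifs at h <;> omega

theorem Xmat_one_apply {K : ℕ} (hK : Even K) (i j : Fin (2 * K)) :
    Xmat K 1 1 i j =
      if j = blockPartner K i then (if (i : ℕ) < K ∨ (i : ℕ) % 2 = 0 then 1 else -1) else 0 := by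
  obtain ⟨t, rfl⟩ := hK
  simp only [Xmat, blockPartner, of_apply, Pi.one_apply, Fin.ext_iff]
  split_ifs <;> first | rfl | omega

theorem Xmat_one_mul_transpose {K : ℕ} (hK : Even K) : Xmat K 1 1 * (Xmat K 1 1)ᵀ = 1 :=
  mul_transpose_eq_one_of_signed_perm (blockPartner_injective hK)
    (fun i => by split_ifs <;> norm_num) (Xmat_one_apply hK)

theorem Xmat_eq_Xhat_mul (K : ℕ) (ρ σ : ℕ → ℝ) : Xmat K ρ σ = Xhat K ρ σ * Xmat K 1 1 := by
  ext i j
  simp only [Xhat, Xmat, diagonal_mul, of_apply, Pi.one_apply]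
  split_ifs <;> simp_all

theorem Xhat_diag_eq_of_Xmat_one_ne_zero (K : ℕ) (ρ σ : ℕ → ℝ) {i j : Fin (2 * K)}
    (h : Xmat K 1 1 i j ≠ 0) : (Xhat K ρ σ).diag i = (Xhat K ρ σ).diag j := by
  simp only [Xhat, Xmat, diag_apply, diagonal_apply_eq, of_apply] at h ⊢
  split_ifs at h ⊢ <;> simp_all

theorem Xhat_diag_nonneg {K : ℕ} (hK : Even K) {ρ σ : ℕ → ℝ} (hρ : ∀ i < K, 0 ≤ ρ i)
    (hσ : ∀ j < K / 2, 0 ≤ σ j) (i : Fin (2 * K)) : 0 ≤ (Xhat K ρ σ).diag i := by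
  obtain ⟨t, rfl⟩ := hK
  have := i.isLt
  simp only [Xhat, diag_apply, diagonal_apply_eq]
  split_ifs with hi
  · exact hρ i hi
  · exact hσ _ (by omega)

theorem pdet_mul_mul_transpose {M N : ℕ} (Z : Matrix (Fin M) (Fin N) ℝ)
    (X : Matrix (Fin N) (Fin N) ℝ) (Y : Finset (Fin M)) :
    pdet (Z * X * Zᵀ) Y = (Z.submatrix Subtype.val id * X * (Z.submatrix (Subtype.val : Y → Fin M) id)ᵀ).det := by
  rw [pdet, submatrix_mul _ _ _ id _ Function.bijective_id,
    submatrix_mul _ _ _ id _ Function.bijective_id]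
  rfl

theorem det_principal_le_det_proposal_general
    (M K : ℕ) (hKeven : Even K)
    (ρ σ : ℕ → ℝ) (hρ : ∀ i < K, 0 < ρ i) (hσ : ∀ j < K / 2, 0 < σ j)
    (Z : Matrix (Fin M) (Fin (2 * K)) ℝ) (Y : Finset (Fin M)) :
    pdet (Z * Xmat K ρ σ * Zᵀ) Y ≤ pdet (Z * Xhat K ρ σ * Zᵀ) Y := by
  have hd := Xhat_diag_nonneg hKeven (fun i hi => (hρ i hi).le) (fun j hj => (hσ j hj).le)
  set D := diagonal fun i => √((Xhat K ρ σ).diag i)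
  have hXhat_diag : diagonal (Xhat K ρ σ).diag = Xhat K ρ σ :=
    (isDiag_diagonal _).diagonal_diag
  have hXhat : Xhat K ρ σ = D * D := by
    simp only [D, diagonal_mul_diagonal, Real.mul_self_sqrt (hd _), hXhat_diag]
  have hXmat : Xmat K ρ σ = D * Xmat K 1 1 * D := by
    rw [Xmat_eq_Xhat_mul, ← hXhat_diag,
      diagonal_mul_eq_diagonal_sqrt_mul_mul hd fun i j => Xhat_diag_eq_of_Xmat_one_ne_zero K ρ σ]
  rw [pdet_mul_mul_transpose, pdet_mul_mul_transpose, hXmat, hXhat]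
  set B := Z.submatrix (Subtype.val : Y → Fin M) id
  have hDT : Dᵀ = D := diagonal_transpose _
  calc (B * (D * Xmat K 1 1 * D) * Bᵀ).det = (B * D * Xmat K 1 1 * (B * D)ᵀ).det := by
        simp only [transpose_mul, hDT, Matrix.mul_assoc]
    _ ≤ (B * D * (B * D)ᵀ).det := det_mul_mul_transpose_le (Xmat_one_mul_transpose hKeven) _
    _ = (B * (D * D) * Bᵀ).det := by simp only [transpose_mul, hDT, Matrix.mul_assoc]

/-- For every subset `Y ⊆ {1,…,M}`, `det(L_Y) ≤ det(L̂_Y)` where `L = Z X Zᵀ` is the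
nonsymmetric kernel and `L̂ = Z X̂ Zᵀ` is the symmetric proposal kernel. -/
theorem det_principal_le_det_proposal
    (M K : ℕ) (hM : 0 < M) (hK : 0 < K) (hKeven : Even K)
    (ρ σ : ℕ → ℝ) (hρ : ∀ i < K, 0 < ρ i) (hσ : ∀ j < K / 2, 0 < σ j)
    (Z : Matrix (Fin M) (Fin (2 * K)) ℝ) (Y : Finset (Fin M)) :
    pdet (Z * Xmat K ρ σ * Zᵀ) Y ≤ pdet (Z * Xhat K ρ σ * Zᵀ) Y :=
  det_principal_le_det_proposal_general M K hKeven ρ σ hρ hσ Z Y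
end

section
/- Let L ∈ ℝ^{M×M} be such that L + I_M is invertible, and define the marginal kernel K = I_M − (L + I_M)^{-1}. Then for every subset A ⊆ {1,…,M}, Σ_{Y : A ⊆ Y ⊆ {1,…,M}} det(L_Y) = det(K_A) · det(L + I_M). (This holds without any symmetry assumption on L; it expresses that the marginal probability Pr(A ⊆ Y) of a determinantal point process with kernel L equals det(K_A).) -/
/-!
Write `P_A` for the diagonal projection onto the coordinates in `A`. Expanding
`det (L + (1 - P_A))` row by row, the term that takes the rows of `L` exactly on `Y` is
`det L_Y` when `A ⊆ Y` and vanishes otherwise (a row of `1 - P_A` indexed by `A` is zero),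
so `det (L + 1 - P_A)` is the left-hand side. On the other hand
`L + 1 - P_A = (1 - P_A (L + 1)⁻¹) (L + 1)`, and the first factor has the rows of
`K = 1 - (L + 1)⁻¹` on `A` and identity rows elsewhere, so its determinant is `det K_A`.
-/

open Matrix

namespace Matrix

variable {n R : Type*} [Fintype n] [DecidableEq n] [CommRing R]

theorem det_add_eq_sum_det_piecewise (B C : Matrix n n R) :
    (B + C).det = ∑ S : Finset n, (of (S.piecewise B.row C.row)).det :=
  detRowAlternating.map_add_univ B C

theorem det_add_diagonal_compl_eq_sum_superset (L : Matrix n n R) (A : Finset n) :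
    (L + diagonal fun i => if i ∈ A then 0 else 1).det =
      ∑ Y ∈ Finset.univ.filter (A ⊆ ·), (L.submatrix ((↑) : Y → n) (↑)).det := by
  rw [det_add_eq_sum_det_piecewise, Finset.sum_filter]
  refine Finset.sum_congr rfl fun Y _ => ?_
  split_ifs with hAY
  · rw [← det_piecewise_one_eq_submatrix_det]
    congr 2
    ext i j
    by_cases hiY : i ∈ Y
    · simp [hiY]
    · have hiA : i ∉ A := fun h => hiY (hAY h)
      simp [hiY, hiA, one_apply, diagonal_apply]
  · obtain ⟨i, hiA, hiY⟩ := Finset.not_subset.mp hAY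
    exact det_eq_zero_of_row_eq_zero i fun j => by simp [hiY, hiA, diagonal_apply]

theorem one_sub_diagonal_mul_eq_piecewise (X : Matrix n n R) (A : Finset n) :
    1 - diagonal (fun i => if i ∈ A then 1 else 0) * X =
      of (A.piecewise (1 - X).row (1 : Matrix n n R).row) := by
  ext i j
  by_cases hiA : i ∈ A <;> simp [hiA]

end Matrix

theorem marginal_kernel_principal_det_general
    (M : ℕ) (L : Matrix (Fin M) (Fin M) ℝ)
    (h : IsUnit (L + 1)) (A : Finset (Fin M)) :
    ∑ Y ∈ Finset.univ.filter (fun Y : Finset (Fin M) => A ⊆ Y), pdet L Y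
      = pdet (1 - (L + 1)⁻¹) A * (L + 1).det := by
  set P : Matrix (Fin M) (Fin M) ℝ := diagonal fun i => if i ∈ A then 1 else 0
  have one_sub_P : 1 - P = diagonal fun i => if i ∈ A then 0 else 1 := by
    rw [← diagonal_one, diagonal_sub]
    congr 1
    funext i
    split_ifs <;> simp
  have factor : L + (1 - P) = (1 - P * (L + 1)⁻¹) * (L + 1) := by
    rw [sub_mul, one_mul, Matrix.mul_assoc, nonsing_inv_mul _ ((isUnit_iff_isUnit_det _).mp h),
      mul_one]
    abel
  unfold pdet
  rw [← det_add_diagonal_compl_eq_sum_superset, ← one_sub_P, factor, det_mul,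
    one_sub_diagonal_mul_eq_piecewise, det_piecewise_one_eq_submatrix_det]

/-- For `L` with `L + I` invertible and marginal kernel `K = I − (L + I)⁻¹`, one has
`Σ_{Y ⊇ A} det(L_Y) = det(K_A) · det(L + I)` for every subset `A`, i.e. the marginal
probability `Pr(A ⊆ Y)` of the DPP with kernel `L` equals `det(K_A)`. No symmetry
assumption is made on `L`. -/
theorem marginal_kernel_principal_det
    (M : ℕ) (hM : 0 < M) (L : Matrix (Fin M) (Fin M) ℝ)
    (h : IsUnit (L + 1)) (A : Finset (Fin M)) :
    ∑ Y ∈ Finset.univ.filter (fun Y : Finset (Fin M) => A ⊆ Y), pdet L Y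
      = pdet (1 - (L + 1)⁻¹) A * (L + 1).det :=
  marginal_kernel_principal_det_general M L h A
end

section
/- Suppose the columns of Z are orthonormal, i.e., Zᵀ Z = I_{2K}. Then the ratio of normalizers of the proposal and target kernels satisfies det(L̂ + I_M) / det(L + I_M) = Π_{j=1}^{K/2} (1 + 2σ_j/(σ_j² + 1)). -/
/-!
By Sylvester's determinant identity, `det (1 + Z A Zᵀ) = det (1 + A Zᵀ Z) = det (1 + A)`, so
orthonormality of the columns of `Z` removes `Z` from both normalizers. Reordering the indices
as `Fin K ⊕ Fin 2 × Fin (K / 2)` makes `X + 1` block diagonal with blocks `ρ_i + 1` and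
`[[1, σ_j], [-σ_j, 1]]`, of determinant `σ_j² + 1`, while `X̂ + 1` contributes `(σ_j + 1)²` per
pair. The `ρ`-factors are nonzero and cancel, and `(σ + 1)² / (σ² + 1) = 1 + 2σ / (σ² + 1)`.
-/

open Matrix

theorem det_mul_mul_transpose_add_one_of_transpose_mul_self {R m n : Type*} [CommRing R]
    [Fintype m] [Fintype n] [DecidableEq m] [DecidableEq n] {Z : Matrix m n R}
    (hZ : Zᵀ * Z = 1) (A : Matrix n n R) : (Z * A * Zᵀ + 1).det = (A + 1).det := by
  rw [add_comm, Matrix.mul_assoc, det_one_add_mul_comm, Matrix.mul_assoc, hZ, Matrix.mul_one,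
    add_comm]

def blockIndexEquiv (K : ℕ) (hK : Even K) : Fin K ⊕ Fin 2 × Fin (K / 2) ≃ Fin (2 * K) :=
  (Equiv.sumCongr (Equiv.refl _)
      ((Equiv.prodComm _ _).trans
        (finProdFinEquiv.trans (finCongr (Nat.div_two_mul_two_of_even hK))))).trans
    (finSumFinEquiv.trans (finCongr (two_mul K).symm))

@[simp] lemma blockIndexEquiv_inl_val (K : ℕ) (hK : Even K) (i : Fin K) :
    (blockIndexEquiv K hK (Sum.inl i) : ℕ) = i := by
  simp [blockIndexEquiv]

@[simp] lemma blockIndexEquiv_inr_val (K : ℕ) (hK : Even K) (r : Fin 2) (j : Fin (K / 2)) :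
    (blockIndexEquiv K hK (Sum.inr (r, j)) : ℕ) = K + (2 * j + r) := by
  simp [blockIndexEquiv, add_comm]

lemma Xmat_submatrix_blockIndexEquiv (K : ℕ) (hK : Even K) (ρ σ : ℕ → ℝ) :
    (Xmat K ρ σ).submatrix (blockIndexEquiv K hK) (blockIndexEquiv K hK) =
      fromBlocks (diagonal fun i : Fin K => ρ i) 0 0
        (blockDiagonal fun j : Fin (K / 2) => !![0, σ j; -σ j, 0]) := by
  have hdiv (j : Fin (K / 2)) (r : Fin 2) : (2 * (j : ℕ) + r) / 2 = j := by omega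
  have hmod (j : Fin (K / 2)) (r : Fin 2) : (2 * (j : ℕ) + r) % 2 = r := by omega
  ext (i | ⟨r, j⟩) (i' | ⟨r', j'⟩)
  · simp [Xmat, diagonal_apply, Fin.ext_iff]
  · simp [Xmat, (i.isLt.trans_le (Nat.le_add_right K _)).ne]
  · simp [Xmat]
  · simp only [submatrix_apply, blockIndexEquiv_inr_val, Xmat, of_apply, Nat.add_sub_cancel_left,
      hdiv, hmod]
    fin_cases r <;> fin_cases r' <;> simp [blockDiagonal_apply, Fin.ext_iff]

lemma Xhat_submatrix_blockIndexEquiv (K : ℕ) (hK : Even K) (ρ σ : ℕ → ℝ) :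
    (Xhat K ρ σ).submatrix (blockIndexEquiv K hK) (blockIndexEquiv K hK) =
      diagonal (Sum.elim (fun i : Fin K => ρ i) fun p : Fin 2 × Fin (K / 2) => σ p.2) := by
  rw [Xhat, submatrix_diagonal_equiv]
  congr 1
  ext (i | ⟨r, j⟩)
  · simp
  · simp only [Function.comp_apply, blockIndexEquiv_inr_val, Sum.elim_inr]
    rw [if_neg (by omega)]
    congr 1
    omega

lemma det_Xmat_add_one (K : ℕ) (hK : Even K) (ρ σ : ℕ → ℝ) :
    (Xmat K ρ σ + 1).det = (∏ i : Fin K, (ρ i + 1)) * ∏ j : Fin (K / 2), (σ j ^ 2 + 1) := by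
  rw [← det_submatrix_equiv_self (blockIndexEquiv K hK), submatrix_add, Pi.add_apply,
    Pi.add_apply, submatrix_one_equiv, Xmat_submatrix_blockIndexEquiv, ← fromBlocks_one,
    fromBlocks_add, ← blockDiagonal_one, ← blockDiagonal_add, add_zero, add_zero,
    det_fromBlocks_zero₂₁, det_blockDiagonal, ← diagonal_one, diagonal_add, det_diagonal]
  congr 1
  refine Finset.prod_congr rfl fun j _ => ?_
  simp [det_fin_two, sq, add_comm]

lemma det_Xhat_add_one (K : ℕ) (hK : Even K) (ρ σ : ℕ → ℝ) :
    (Xhat K ρ σ + 1).det = (∏ i : Fin K, (ρ i + 1)) * ∏ j : Fin (K / 2), (σ j + 1) ^ 2 := by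
  rw [← det_submatrix_equiv_self (blockIndexEquiv K hK), submatrix_add, Pi.add_apply,
    Pi.add_apply, submatrix_one_equiv, Xhat_submatrix_blockIndexEquiv, ← diagonal_one,
    diagonal_add, det_diagonal, Fintype.prod_sum_type, Fintype.prod_prod_type_right]
  simp [sq]

theorem normalizer_ratio_orthonormal_general
    (M K : ℕ) (hKeven : Even K)
    (ρ σ : ℕ → ℝ) (hρ : ∀ i < K, 0 < ρ i)
    (Z : Matrix (Fin M) (Fin (2 * K)) ℝ) (hZ : Zᵀ * Z = 1) :
    (Z * Xhat K ρ σ * Zᵀ + 1).det / (Z * Xmat K ρ σ * Zᵀ + 1).det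
      = ∏ j ∈ Finset.range (K / 2), (1 + 2 * σ j / (σ j ^ 2 + 1)) := by
  have hρ_factors : ∏ i : Fin K, (ρ i + 1) ≠ 0 :=
    Finset.prod_ne_zero_iff.2 fun i _ => by linarith [hρ i i.isLt]
  rw [det_mul_mul_transpose_add_one_of_transpose_mul_self hZ,
    det_mul_mul_transpose_add_one_of_transpose_mul_self hZ, det_Xhat_add_one K hKeven,
    det_Xmat_add_one K hKeven, mul_div_mul_left _ _ hρ_factors, ← Finset.prod_div_distrib,
    ← Fin.prod_univ_eq_prod_range]
  refine Finset.prod_congr rfl fun j _ => ?_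
  have hσ_sq : σ j ^ 2 + 1 ≠ 0 := by positivity
  field_simp
  ring

/-- If the columns of `Z` are orthonormal, the ratio of normalizers of the proposal
kernel `L̂ = Z X̂ Zᵀ` and the target kernel `L = Z X Zᵀ` is
`Π_j (1 + 2σ_j/(σ_j² + 1))`. -/
theorem normalizer_ratio_orthonormal
    (M K : ℕ) (hM : 0 < M) (hK : 0 < K) (hKeven : Even K) (hKM : 2 * K ≤ M)
    (ρ σ : ℕ → ℝ) (hρ : ∀ i < K, 0 < ρ i) (hσ : ∀ j < K / 2, 0 < σ j)
    (Z : Matrix (Fin M) (Fin (2 * K)) ℝ) (hZ : Zᵀ * Z = 1) :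
    (Z * Xhat K ρ σ * Zᵀ + 1).det / (Z * Xmat K ρ σ * Zᵀ + 1).det
      = ∏ j ∈ Finset.range (K / 2), (1 + 2 * σ j / (σ j ^ 2 + 1)) :=
  normalizer_ratio_orthonormal_general M K hKeven ρ σ hρ Z hZ
end

section
/- For every 0 ≤ k ≤ 2K, the number of pairs (I, J) of subsets of {1,…,2K} with |I| = |J| = k such that det(X_{I,J}) ≠ 0 equals the binomial coefficient C(2K, k); in particular it equals the number of subsets I ⊆ {1,…,2K} with |I| = k for which det(X̂_I) ≠ 0. -/
open Matrix

/-- `subDet X I J` is the determinant of the submatrix of `X` with rows indexed by `I`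
and columns indexed by `J`, both taken in increasing order (defined to be `0` when
`|I| ≠ |J|`; the determinant of an empty matrix is `1`). -/
noncomputable def subDet {n : ℕ} (X : Matrix (Fin n) (Fin n) ℝ) (I J : Finset (Fin n)) : ℝ :=
  if h : J.card = I.card then
    Matrix.det (Matrix.of fun (a b : Fin I.card) =>
      X (I.orderIsoOfFin rfl a).1 (J.orderIsoOfFin h b).1)
  else 0

open Matrix

/-! `X` is a monomial matrix `diagonal d * Pπ` with all `d i ≠ 0`: row `i` has its only
nonzero entry in column `π i`, where `π` fixes the first `K` indices and swaps the two indices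
of each `2 × 2` block. The minor on rows `I` and columns `J` of such a matrix is
`± ∏_{i ∈ I} d i` when `J = π(I)`, and otherwise the submatrix has a zero row. So the nonzero
`k × k` minors are indexed by the `k`-subsets `I`; `X̂` is the case `π = 1`. -/

section MonomialMatrix

variable {R ι κ : Type*} [CommRing R] [Fintype ι] [DecidableEq ι] [Fintype κ] [DecidableEq κ]

theorem diagonal_mul_permMatrix_apply (d : ι → R) (π : Equiv.Perm ι) (i j : ι) :
    (diagonal d * π.permMatrix R) i j = if π i = j then d i else 0 := by
  simp [diagonal_mul, PEquiv.toMatrix_apply, eq_comm]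

theorem det_submatrix_diagonal_mul_permMatrix (d : ι → R) (π : Equiv.Perm ι) {r : κ → ι}
    (hr : Function.Injective r) (τ : Equiv.Perm κ) :
    ((diagonal d * π.permMatrix R).submatrix r (π ∘ r ∘ τ)).det
      = Equiv.Perm.sign τ * ∏ a, d (r a) := by
  have hdiag : (diagonal d * π.permMatrix R).submatrix r (π ∘ r) = diagonal (d ∘ r) := by
    ext a b
    simp [diagonal_apply, hr.eq_iff]
  have hperm : (diagonal d * π.permMatrix R).submatrix r (π ∘ r ∘ τ)
      = ((diagonal d * π.permMatrix R).submatrix r (π ∘ r)).submatrix id τ := rfl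
  rw [hperm, det_permute', hdiag, det_diagonal]
  rfl

theorem det_submatrix_diagonal_mul_permMatrix_eq_zero (d : ι → R) (π : Equiv.Perm ι)
    {r c : κ → ι} {a : κ} (ha : π (r a) ∉ Set.range c) :
    ((diagonal d * π.permMatrix R).submatrix r c).det = 0 :=
  det_eq_zero_of_row_eq_zero a fun b => by
    rw [submatrix_apply, diagonal_mul_permMatrix_apply, if_neg fun h => ha ⟨b, h.symm⟩]

end MonomialMatrix

section SubDet

variable {n : ℕ} {d : Fin n → ℝ}

theorem subDet_eq_det_submatrix (X : Matrix (Fin n) (Fin n) ℝ) {I J : Finset (Fin n)}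
    (hcard : J.card = I.card) :
    subDet X I J = (X.submatrix (I.orderEmbOfFin rfl) (J.orderEmbOfFin hcard)).det := by
  simp [subDet, dif_pos hcard, submatrix]

theorem subDet_diagonal_mul_permMatrix_ne_zero_iff (hd : ∀ i, d i ≠ 0) (π : Equiv.Perm (Fin n))
    (I J : Finset (Fin n)) :
    subDet (diagonal d * π.permMatrix ℝ) I J ≠ 0 ↔ J = I.map π.toEmbedding := by
  by_cases hcard : J.card = I.card
  swap
  · simp only [subDet, dif_neg hcard, ne_eq, not_true_eq_false, false_iff]
    rintro rfl
    exact hcard (Finset.card_map _)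
  rw [subDet_eq_det_submatrix _ hcard]
  set r := I.orderEmbOfFin rfl
  set c := J.orderEmbOfFin hcard
  constructor
  · intro hne
    by_contra hJ
    obtain ⟨i, hiI, hiJ⟩ : ∃ i ∈ I, π i ∉ J := by
      by_contra! h
      refine hJ (Finset.eq_of_subset_of_card_le (fun j hj => ?_)
        (by rw [Finset.card_map, hcard])).symm
      obtain ⟨i, hi, rfl⟩ := Finset.mem_map.mp hj
      exact h i hi
    obtain ⟨a, rfl⟩ : i ∈ Set.range r := by simpa [r] using hiI
    refine hne (det_submatrix_diagonal_mul_permMatrix_eq_zero d π (a := a)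
      fun ⟨b, hb⟩ => hiJ ?_)
    simp [← hb, c]
  · intro hJ
    let τ : Equiv.Perm (Fin I.card) := (J.orderIsoOfFin hcard).toEquiv.trans
      ((Equiv.subtypeEquiv π.symm fun j => by simp [hJ, Finset.mem_map_equiv]).trans
        (I.orderIsoOfFin rfl).toEquiv.symm)
    have hc : c = π ∘ r ∘ τ := by
      ext b
      simp [τ, r, c, ← Finset.coe_orderIsoOfFin_apply]
    rw [hc, det_submatrix_diagonal_mul_permMatrix d π r.injective τ]
    exact mul_ne_zero (Int.cast_ne_zero.mpr (Units.ne_zero _))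
      (Finset.prod_ne_zero_iff.mpr fun a _ => hd (r a))

theorem card_nonzero_subDet_diagonal_mul_permMatrix (hd : ∀ i, d i ≠ 0)
    (π : Equiv.Perm (Fin n)) (k : ℕ) :
    Nat.card {p : Finset (Fin n) × Finset (Fin n) //
        p.1.card = k ∧ p.2.card = k ∧ subDet (diagonal d * π.permMatrix ℝ) p.1 p.2 ≠ 0}
      = n.choose k := by
  let e : {p : Finset (Fin n) × Finset (Fin n) //
        p.1.card = k ∧ p.2.card = k ∧ subDet (diagonal d * π.permMatrix ℝ) p.1 p.2 ≠ 0}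
      ≃ {I : Finset (Fin n) // I.card = k} :=
    { toFun := fun p => ⟨p.1.1, p.2.1⟩
      invFun := fun I => ⟨(I.1, I.1.map π.toEmbedding), I.2, (Finset.card_map _).trans I.2,
        (subDet_diagonal_mul_permMatrix_ne_zero_iff hd π _ _).mpr rfl⟩
      left_inv := fun ⟨(I, J), _, _, hne⟩ => by
        simp [((subDet_diagonal_mul_permMatrix_ne_zero_iff hd π I J).mp hne).symm]
      right_inv := fun _ => rfl }
  rw [Nat.card_congr e, Nat.card_eq_fintype_card, Fintype.card_finset_len, Fintype.card_fin]

theorem card_nonzero_principal_subDet_diagonal (hd : ∀ i, d i ≠ 0) (k : ℕ) :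
    Nat.card {I : Finset (Fin n) // I.card = k ∧ subDet (diagonal d) I I ≠ 0} = n.choose k := by
  have hne : ∀ I, subDet (diagonal d) I I ≠ 0 := fun I => by
    simpa [permMatrix_one] using (subDet_diagonal_mul_permMatrix_ne_zero_iff hd 1 I I).mpr
      (by rw [Equiv.Perm.one_def, Equiv.refl_toEmbedding, Finset.map_refl])
  rw [Nat.card_congr (Equiv.subtypeEquivRight fun I => and_iff_left (hne I)),
    Nat.card_eq_fintype_card, Fintype.card_finset_len, Fintype.card_fin]

end SubDet

section Xmat

variable {K : ℕ} {ρ σ : ℕ → ℝ}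

/-- Row `i` of `X` has its only nonzero entry in column `xmatPerm K hK i`. -/
def xmatPerm (K : ℕ) (hK : Even K) : Equiv.Perm (Fin (2 * K)) :=
  Function.Involutive.toPerm
    (fun i => ⟨if (i : ℕ) < K then i else if ((i : ℕ) - K) % 2 = 0 then i + 1 else i - 1, by
      have := hK.two_dvd
      split_ifs <;> omega⟩)
    fun i => Fin.ext (by dsimp only; split_ifs <;> omega)

theorem xmatPerm_val (hK : Even K) (i : Fin (2 * K)) :
    (xmatPerm K hK i : ℕ) =
      if (i : ℕ) < K then (i : ℕ)
      else if ((i : ℕ) - K) % 2 = 0 then (i : ℕ) + 1 else (i : ℕ) - 1 :=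
  rfl

def xmatDiag (K : ℕ) (ρ σ : ℕ → ℝ) (i : Fin (2 * K)) : ℝ :=
  if (i : ℕ) < K then ρ i
  else if ((i : ℕ) - K) % 2 = 0 then σ (((i : ℕ) - K) / 2) else -σ (((i : ℕ) - K) / 2)

theorem Xmat_eq_diagonal_mul_permMatrix (hK : Even K) :
    Xmat K ρ σ = diagonal (xmatDiag K ρ σ) * (xmatPerm K hK).permMatrix ℝ := by
  ext i j
  rw [diagonal_mul_permMatrix_apply]
  simp only [Xmat, of_apply, xmatDiag, Fin.ext_iff, xmatPerm_val]
  split_ifs <;> first | rfl | (exfalso; omega)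

theorem xmatDiag_ne_zero (hK : Even K) (hρ : ∀ i < K, 0 < ρ i) (hσ : ∀ j < K / 2, 0 < σ j)
    (i : Fin (2 * K)) : xmatDiag K ρ σ i ≠ 0 := by
  have := hK.two_dvd
  unfold xmatDiag
  split_ifs with h
  · exact (hρ _ h).ne'
  · exact (hσ _ (by omega)).ne'
  · exact neg_ne_zero.mpr (hσ _ (by omega)).ne'

end Xmat

theorem card_nonzero_subdeterminants_general
    (K k : ℕ) (hKeven : Even K)
    (ρ σ : ℕ → ℝ) (hρ : ∀ i < K, 0 < ρ i) (hσ : ∀ j < K / 2, 0 < σ j) :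
    Nat.card {p : Finset (Fin (2 * K)) × Finset (Fin (2 * K)) //
        p.1.card = k ∧ p.2.card = k ∧ subDet (Xmat K ρ σ) p.1 p.2 ≠ 0}
      = Nat.choose (2 * K) k ∧
    Nat.card {I : Finset (Fin (2 * K)) // I.card = k ∧ subDet (Xhat K ρ σ) I I ≠ 0}
      = Nat.choose (2 * K) k := by
  have hXhat_diag : ∀ i : Fin (2 * K),
      (if (i : ℕ) < K then ρ i else σ (((i : ℕ) - K) / 2)) ≠ 0 := fun i => by
    have := hKeven.two_dvd
    split_ifs with h
    · exact (hρ _ h).ne'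
    · exact (hσ _ (by omega)).ne'
  rw [Xmat_eq_diagonal_mul_permMatrix hKeven]
  exact ⟨card_nonzero_subDet_diagonal_mul_permMatrix (xmatDiag_ne_zero hKeven hρ hσ) _ k,
    card_nonzero_principal_subDet_diagonal hXhat_diag k⟩

/-- For every `0 ≤ k ≤ 2K`, the number of pairs `(I, J)` of `k`-subsets of `{1,…,2K}`
with `det(X_{I,J}) ≠ 0` equals `C(2K, k)`, which is also the number of `k`-subsets `I`
with `det(X̂_I) ≠ 0`. -/
theorem card_nonzero_subdeterminants
    (K k : ℕ) (hK : 0 < K) (hKeven : Even K) (hk : k ≤ 2 * K)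
    (ρ σ : ℕ → ℝ) (hρ : ∀ i < K, 0 < ρ i) (hσ : ∀ j < K / 2, 0 < σ j) :
    Nat.card {p : Finset (Fin (2 * K)) × Finset (Fin (2 * K)) //
        p.1.card = k ∧ p.2.card = k ∧ subDet (Xmat K ρ σ) p.1 p.2 ≠ 0}
      = Nat.choose (2 * K) k ∧
    Nat.card {I : Finset (Fin (2 * K)) // I.card = k ∧ subDet (Xhat K ρ σ) I I ≠ 0}
      = Nat.choose (2 * K) k :=
  card_nonzero_subdeterminants_general K k hKeven ρ σ hρ hσ
end
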